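/- Let (E, 𝓕) be an accessible nonempty set system of rank k over a finite set E such that Γ(X) ≠ ∅ for every X ∈ 𝓕_{k−1}. Then the following are equivalent: (i) (E, 𝓕) is a k-truncated antimatroid; (ii) for every monotone linkage function π, the set function F(X) = min{π(x, X) : x ∈ Γ(X)} is quasi-concave on 𝓕_{k−1}. -/
import Mathlib


open Finset

variable {α : Type*}

/-- A set system is accessible: each nonempty feasible set has an element
whose removal keeps it feasible. -/
def Accessible [DecidableEq α] (𝓕 : Finset (Finset α)) : Prop :=
  ∀ X ∈ 𝓕, X.Nonempty → ∃ x ∈ X, X.erase x ∈ 𝓕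

/-- Axiom (A2): for X, Y feasible with X ⊄ Y there is x ∈ X − Y with Y ∪ {x} feasible. -/
def Exchange [DecidableEq α] (𝓕 : Finset (Finset α)) : Prop :=
  ∀ X ∈ 𝓕, ∀ Y ∈ 𝓕, ¬ X ⊆ Y → ∃ x ∈ X \ Y, insert x Y ∈ 𝓕

/-- An antimatroid: a nonempty set system satisfying (A1) and (A2). -/
def IsAntimatroid [DecidableEq α] (𝓕 : Finset (Finset α)) : Prop :=
  𝓕.Nonempty ∧ Accessible 𝓕 ∧ Exchange 𝓕

/-- Feasible continuations Γ(X) = {x ∈ E − X : X ∪ {x} ∈ 𝓕}. -/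
def Gamma [Fintype α] [DecidableEq α] (𝓕 : Finset (Finset α)) (X : Finset α) : Finset α :=
  Finset.univ.filter (fun x => x ∉ X ∧ insert x X ∈ 𝓕)

/-- The k-truncation 𝓕_k = {X ∈ 𝓕 : |X| ≤ k}. -/
def trunc [DecidableEq α] (𝓕 : Finset (Finset α)) (k : ℕ) : Finset (Finset α) :=
  𝓕.filter (fun X => X.card ≤ k)

/-- A k-truncated antimatroid: the k-truncation of some antimatroid. -/
def IsKTruncAntimatroid [DecidableEq α] (𝓕 : Finset (Finset α)) (k : ℕ) : Prop :=
  ∃ 𝓕' : Finset (Finset α), IsAntimatroid 𝓕' ∧ 𝓕 = trunc 𝓕' k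

/-- The rank of a set system: maximal cardinality of a feasible set. -/
def rank (𝓕 : Finset (Finset α)) : ℕ := 𝓕.sup Finset.card

/-- The k-truncated interval property without upper bounds:
for feasible X ⊆ Y with |X| ≤ k−1, |Y| ≤ k−1 and x ∉ Y,
X ∪ {x} feasible implies Y ∪ {x} feasible. -/
def TruncIntervalWUB [DecidableEq α] (𝓕 : Finset (Finset α)) (k : ℕ) : Prop :=
  ∀ X ∈ 𝓕, ∀ Y ∈ 𝓕, X.card < k → Y.card < k → X ⊆ Y →
    ∀ x ∉ Y, insert x X ∈ 𝓕 → insert x Y ∈ 𝓕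

/-- The interval property without upper bounds. -/
def IntervalWUB [DecidableEq α] (𝓕 : Finset (Finset α)) : Prop :=
  ∀ X ∈ 𝓕, ∀ Y ∈ 𝓕, X ⊆ Y → ∀ x ∉ Y, insert x X ∈ 𝓕 → insert x Y ∈ 𝓕

/-- A monotone linkage function: π(x, ·) is antitone with respect to inclusion. -/
def MonoLinkage (π : α → Finset α → ℝ) : Prop :=
  ∀ x : α, ∀ X Y : Finset α, X ⊆ Y → π x Y ≤ π x X

/-- Z is a maximal feasible subset of W. -/
def MaxFeasible [DecidableEq α] (𝓕 : Finset (Finset α)) (W Z : Finset α) : Prop :=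
  Z ∈ 𝓕 ∧ Z ⊆ W ∧ ∀ Z' ∈ 𝓕, Z ⊆ Z' → Z' ⊆ W → Z' = Z

open Classical in
/-- The linkage function π_F constructed from a set function F:
π_F(x,X) = max{F(A) : A ∈ [X, E−x]_{𝓕_{k−1}}} if x ∉ X and this interval is nonempty,
and π_F(x,X) = min{F(A) : A ∈ 𝓕_{k−1}} otherwise. -/
noncomputable def piF [DecidableEq α] (𝓕 : Finset (Finset α)) (k : ℕ)
    (F : Finset α → ℝ) (x : α) (X : Finset α) : ℝ :=
  if x ∉ X ∧ ∃ A ∈ 𝓕, A.card < k ∧ X ⊆ A ∧ x ∉ A then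
    sSup (F '' {A : Finset α | A ∈ 𝓕 ∧ A.card < k ∧ X ⊆ A ∧ x ∉ A})
  else
    sInf (F '' {A : Finset α | A ∈ 𝓕 ∧ A.card < k})

lemma mem_gamma [Fintype α] [DecidableEq α] {𝓕 : Finset (Finset α)} {X : Finset α} {x : α} :
    x ∈ Gamma 𝓕 X ↔ x ∉ X ∧ insert x X ∈ 𝓕 := by
  simp [Gamma]

lemma tiwub_of_ktrunc [DecidableEq α] {𝓕 : Finset (Finset α)} {k : ℕ}
    (h : IsKTruncAntimatroid 𝓕 k) : TruncIntervalWUB 𝓕 k := by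
  obtain ⟨𝓕', ⟨-, -, hex⟩, rfl⟩ := h
  intro X hX Y hY hXk hYk hXY x hxY hxX
  rw [trunc, Finset.mem_filter] at hX hY hxX ⊢
  have hns : ¬ insert x X ⊆ Y := fun h => hxY (h (Finset.mem_insert_self x X))
  obtain ⟨y, hy, hins⟩ := hex _ hxX.1 _ hY.1 hns
  rw [Finset.mem_sdiff, Finset.mem_insert] at hy
  have hyx : y = x := by
    rcases hy.1 with h1 | h1
    · exact h1
    · exact absurd (hXY h1) hy.2
  have hins' : insert x Y ∈ 𝓕' := hyx ▸ hins
  refine ⟨hins', ?_⟩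
  have := Finset.card_insert_le x Y
  omega

lemma exchange_of_tiwub [DecidableEq α] {𝓕 : Finset (Finset α)} {k : ℕ}
    (hacc : Accessible 𝓕) (hti : TruncIntervalWUB 𝓕 k)
    (hcard : ∀ X ∈ 𝓕, X.card ≤ k) :
    ∀ n (X : Finset α), X.card ≤ n → X ∈ 𝓕 → ∀ Y ∈ 𝓕, Y.card < k → ¬ X ⊆ Y →
      ∃ x ∈ X \ Y, insert x Y ∈ 𝓕 := by
  intro n
  induction n with
  | zero =>
    intro X hXn hX Y hY hYk hXY
    exact absurd (Finset.card_eq_zero.1 (Nat.le_zero.1 hXn) ▸ Finset.empty_subset Y) hXY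
  | succ n ih =>
    intro X hXn hX Y hY hYk hXY
    have hXne : X.Nonempty := by
      rcases X.eq_empty_or_nonempty with rfl | h
      · exact absurd (Finset.empty_subset Y) hXY
      · exact h
    obtain ⟨x, hxX, hX'⟩ := hacc X hX hXne
    by_cases h : X.erase x ⊆ Y
    · have hxY : x ∉ Y := by
        intro hxY
        refine hXY fun z hz => ?_
        by_cases hzx : z = x
        · exact hzx ▸ hxY
        · exact h (Finset.mem_erase.2 ⟨hzx, hz⟩)
      have hins : insert x (X.erase x) ∈ 𝓕 := by rwa [Finset.insert_erase hxX]
      have hc1 : (X.erase x).card < k := by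
        have h1 := Finset.card_erase_of_mem hxX
        have h2 := hcard X hX
        have h3 := Finset.card_pos.2 hXne
        omega
      exact ⟨x, Finset.mem_sdiff.2 ⟨hxX, hxY⟩, hti _ hX' _ hY hc1 hYk h x hxY hins⟩
    · have hcn : (X.erase x).card ≤ n := by
        have h1 := Finset.card_erase_of_mem hxX
        have h3 := Finset.card_pos.2 hXne
        omega
      obtain ⟨x', hx', h'⟩ := ih (X.erase x) hcn hX' Y hY hYk h
      rw [Finset.mem_sdiff, Finset.mem_erase] at hx'
      exact ⟨x', Finset.mem_sdiff.2 ⟨hx'.1.2, hx'.2⟩, h'⟩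

lemma ktrunc_of_tiwub [Fintype α] [DecidableEq α] {𝓕 : Finset (Finset α)} {k : ℕ}
    (hne : 𝓕.Nonempty) (hacc : Accessible 𝓕) (hr : rank 𝓕 = k)
    (hti : TruncIntervalWUB 𝓕 k) : IsKTruncAntimatroid 𝓕 k := by
  classical
  have hcard : ∀ X ∈ 𝓕, X.card ≤ k := fun X hX => hr ▸ Finset.le_sup hX
  refine ⟨𝓕 ∪ Finset.univ.filter (fun X => k < X.card ∧ ∃ B ∈ 𝓕, B.card = k ∧ B ⊆ X),
    ⟨?_, ?_, ?_⟩, ?_⟩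
  · exact hne.mono Finset.subset_union_left
  · -- Accessible
    intro X hX hXne
    rw [Finset.mem_union, Finset.mem_filter] at hX
    rcases hX with hX | ⟨-, hk, B, hB, hBk, hBX⟩
    · obtain ⟨x, hx, h⟩ := hacc X hX hXne
      exact ⟨x, hx, Finset.mem_union_left _ h⟩
    · have hns : ¬ X ⊆ B := fun h => by
        have := Finset.card_le_card h; omega
      obtain ⟨x, hx⟩ := Finset.sdiff_nonempty.2 hns
      rw [Finset.mem_sdiff] at hx
      refine ⟨x, hx.1, ?_⟩
      have hBsub : B ⊆ X.erase x := Finset.subset_erase.2 ⟨hBX, hx.2⟩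
      have hcerase : (X.erase x).card = X.card - 1 := Finset.card_erase_of_mem hx.1
      by_cases hkc : k < (X.erase x).card
      · refine Finset.mem_union_right _ (Finset.mem_filter.2 ⟨Finset.mem_univ _,
          hkc, B, hB, hBk, hBsub⟩)
      · have : X.erase x = B := by
          refine (Finset.eq_of_subset_of_card_le hBsub ?_).symm
          omega
        exact Finset.mem_union_left _ (this ▸ hB)
  · -- Exchange
    intro X hX Y hY hXY
    rw [Finset.mem_union, Finset.mem_filter] at hX hY
    obtain ⟨x0, hx0⟩ := Finset.sdiff_nonempty.2 hXY
    have hsupk : ∀ {W : Finset α}, W ∈ 𝓕 → W.card = k →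
        insert x0 Y ∈ 𝓕 ∪ Finset.univ.filter
          (fun X => k < X.card ∧ ∃ B ∈ 𝓕, B.card = k ∧ B ⊆ X) → True := fun _ _ _ => trivial
    -- helper: if Y contains a feasible k-set B then done
    have hbig : ∀ B ∈ 𝓕, B.card = k → B ⊆ Y →
        ∃ x ∈ X \ Y, insert x Y ∈ 𝓕 ∪ Finset.univ.filter
          (fun X => k < X.card ∧ ∃ B ∈ 𝓕, B.card = k ∧ B ⊆ X) := by
      intro B hB hBk hBY
      refine ⟨x0, hx0, Finset.mem_union_right _ (Finset.mem_filter.2 ⟨Finset.mem_univ _, ?_,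
        B, hB, hBk, hBY.trans (Finset.subset_insert _ _)⟩)⟩
      have h1 := Finset.card_le_card hBY
      have h2 : (insert x0 Y).card = Y.card + 1 :=
        Finset.card_insert_of_notMem (Finset.mem_sdiff.1 hx0).2
      omega
    rcases hY with hY | ⟨-, hYk, B, hB, hBk, hBY⟩
    · rcases Nat.lt_or_ge Y.card k with hYk | hYk
      · -- Y.card < k : use exchange_of_tiwub
        rcases hX with hX | ⟨-, hXk, B', hB', hB'k, hB'X⟩
        · obtain ⟨x, hx, h⟩ := exchange_of_tiwub hacc hti hcard X.card X le_rfl hX Y hY hYk hXY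
          exact ⟨x, hx, Finset.mem_union_left _ h⟩
        · have hns : ¬ B' ⊆ Y := fun h => by
            have := Finset.card_le_card h; omega
          obtain ⟨x, hx, h⟩ := exchange_of_tiwub hacc hti hcard B'.card B' le_rfl hB' Y hY hYk hns
          rw [Finset.mem_sdiff] at hx
          exact ⟨x, Finset.mem_sdiff.2 ⟨hB'X hx.1, hx.2⟩, Finset.mem_union_left _ h⟩
      · have : Y.card = k := le_antisymm (hcard Y hY) hYk
        exact hbig Y hY this Finset.Subset.rfl
    · exact hbig B hB hBk hBY
  · -- trunc equality
    ext X
    rw [trunc, Finset.mem_filter, Finset.mem_union, Finset.mem_filter]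
    constructor
    · intro hX
      exact ⟨Or.inl hX, hcard X hX⟩
    · rintro ⟨hX | ⟨-, hk, -⟩, hXk⟩
      · exact hX
      · omega

/-- For an accessible nonempty set system of rank k in which every
X ∈ 𝓕_{k−1} has a feasible continuation: (i) being a k-truncated antimatroid is
equivalent to (ii) quasi-concavity of F(X) = min{π(x,X) : x ∈ Γ(X)} on 𝓕_{k−1}
for every monotone linkage function π. -/
theorem statement_15 [Fintype α] [DecidableEq α] (𝓕 : Finset (Finset α)) (k : ℕ)
    (hne : 𝓕.Nonempty) (hacc : Accessible 𝓕) (hr : rank 𝓕 = k)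
    (hΓ : ∀ X ∈ 𝓕, X.card < k → (Gamma 𝓕 X).Nonempty) :
    IsKTruncAntimatroid 𝓕 k ↔
      ∀ π : α → Finset α → ℝ, MonoLinkage π →
        ∀ X ∈ 𝓕, X.card < k → ∀ Y ∈ 𝓕, Y.card < k →
          ∀ Z : Finset α, MaxFeasible 𝓕 (X ∩ Y) Z →
            min (sInf ((fun x => π x X) '' ((Gamma 𝓕 X : Finset α) : Set α)))
                (sInf ((fun x => π x Y) '' ((Gamma 𝓕 Y : Finset α) : Set α)))
              ≤ sInf ((fun x => π x Z) '' ((Gamma 𝓕 Z : Finset α) : Set α)) := by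
  constructor
  · intro h π hπ X hX hXk Y hY hYk Z hZ
    have hti := tiwub_of_ktrunc h
    obtain ⟨hZF, hZsub, hZmax⟩ := hZ
    have hZX : Z ⊆ X := hZsub.trans Finset.inter_subset_left
    have hZY : Z ⊆ Y := hZsub.trans Finset.inter_subset_right
    have hZk : Z.card < k := lt_of_le_of_lt (Finset.card_le_card hZX) hXk
    have hΓZ : ((Gamma 𝓕 Z : Finset α) : Set α).Nonempty := by
      obtain ⟨z, hz⟩ := hΓ Z hZF hZk
      exact ⟨z, hz⟩
    refine le_csInf (hΓZ.image _) ?_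
    rintro b ⟨x, hx, rfl⟩
    rw [Finset.mem_coe, mem_gamma] at hx
    obtain ⟨hxZ, hins⟩ := hx
    have hnot : ¬(x ∈ X ∧ x ∈ Y) := by
      rintro ⟨h1, h2⟩
      have := hZmax (insert x Z) hins (Finset.subset_insert _ _)
        (Finset.insert_subset (Finset.mem_inter.2 ⟨h1, h2⟩) hZsub)
      exact hxZ (this ▸ Finset.mem_insert_self x Z)
    have key : ∀ (W : Finset α), W ∈ 𝓕 → W.card < k → Z ⊆ W → x ∉ W →
        sInf ((fun y => π y W) '' ((Gamma 𝓕 W : Finset α) : Set α)) ≤ π x Z := by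
      intro W hW hWk hZW hxW
      have hinsW : insert x W ∈ 𝓕 := hti Z hZF W hW hZk hWk hZW x hxW hins
      have hxΓ : x ∈ ((Gamma 𝓕 W : Finset α) : Set α) := by
        rw [Finset.mem_coe, mem_gamma]; exact ⟨hxW, hinsW⟩
      calc sInf ((fun y => π y W) '' ((Gamma 𝓕 W : Finset α) : Set α))
          ≤ π x W := csInf_le (((Gamma 𝓕 W).finite_toSet.image _).bddBelow) ⟨x, hxΓ, rfl⟩
        _ ≤ π x Z := hπ x Z W hZW
    by_cases hxX : x ∈ X
    · have hxY : x ∉ Y := fun hxY => hnot ⟨hxX, hxY⟩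
      exact le_trans (min_le_right _ _) (key Y hY hYk hZY hxY)
    · exact le_trans (min_le_left _ _) (key X hX hXk hZX hxX)
  · intro h
    apply ktrunc_of_tiwub hne hacc hr
    intro X hX Y hY hXk hYk hXY x hxY hxX
    by_cases hXeqY : X = Y
    · exact hXeqY ▸ hxX
    by_contra hins
    have hxnX : x ∉ X := fun hx => hxY (hXY hx)
    have hssub : X ⊂ Y := ⟨hXY, fun h => hXeqY (Finset.Subset.antisymm hXY h)⟩
    have hcX : (insert x X).card < k := by
      have h1 : (insert x X).card = X.card + 1 := Finset.card_insert_of_notMem hxnX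
      have h2 := Finset.card_lt_card hssub
      omega
    set π : α → Finset α → ℝ := fun z _ => if z = x then 0 else 1 with hπdef
    have hmono : MonoLinkage π := fun z W W' _ => le_refl _
    have heq : insert x X ∩ Y = X := by
      ext z
      simp only [Finset.mem_inter, Finset.mem_insert]
      constructor
      · rintro ⟨hz1 | hz1, hz2⟩
        · exact absurd (hz1 ▸ hz2) hxY
        · exact hz1
      · intro hz
        exact ⟨Or.inr hz, hXY hz⟩
    have hmax : MaxFeasible 𝓕 (insert x X ∩ Y) X := by
      refine ⟨hX, by rw [heq], ?_⟩
      intro Z' _ h1 h2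
      rw [heq] at h2
      exact Finset.Subset.antisymm h2 h1
    have := h π hmono (insert x X) hxX hcX Y hY hYk X hmax
    -- F(X) ≤ 0
    have hFX : sInf ((fun z => π z X) '' ((Gamma 𝓕 X : Finset α) : Set α)) ≤ 0 := by
      have hxΓ : x ∈ ((Gamma 𝓕 X : Finset α) : Set α) := by
        rw [Finset.mem_coe, mem_gamma]; exact ⟨hxnX, hxX⟩
      have : π x X = 0 := if_pos rfl
      exact this ▸ csInf_le (((Gamma 𝓕 X).finite_toSet.image _).bddBelow) ⟨x, hxΓ, rfl⟩
    have hone : ∀ (W : Finset α), W ∈ 𝓕 → W.card < k → x ∉ Gamma 𝓕 W →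
        (1 : ℝ) ≤ sInf ((fun z => π z W) '' ((Gamma 𝓕 W : Finset α) : Set α)) := by
      intro W hW hWk hxW
      have hΓW : ((Gamma 𝓕 W : Finset α) : Set α).Nonempty := by
        obtain ⟨z, hz⟩ := hΓ W hW hWk
        exact ⟨z, hz⟩
      refine le_csInf (hΓW.image _) ?_
      rintro b ⟨z, hz, rfl⟩
      have hzx : z ≠ x := fun hzx => hxW (hzx ▸ Finset.mem_coe.1 hz)
      simp only [hπdef, if_neg hzx]
      exact le_refl 1
    have h1 : (1:ℝ) ≤ sInf ((fun z => π z (insert x X)) '' ((Gamma 𝓕 (insert x X) : Finset α) : Set α)) := by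
      refine hone _ hxX hcX ?_
      rw [mem_gamma]
      rintro ⟨hc, -⟩
      exact hc (Finset.mem_insert_self x X)
    have h2 : (1:ℝ) ≤ sInf ((fun z => π z Y) '' ((Gamma 𝓕 Y : Finset α) : Set α)) := by
      refine hone _ hY hYk ?_
      rw [mem_gamma]
      rintro ⟨-, hc⟩
      exact hins hc
    have := le_trans (le_min h1 h2) this
    linarith
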